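/- Assume additionally a = d and a ≠ 1/2. Then for every initial distribution φ = (α, β) the following three conditions are equivalent: (1) P(X_n^φ = k) = P(X_n^φ = −k) for all integers n ≥ 0 and all k ∈ ℤ; (2) E(X_n^φ) = Σ_{k∈ℤ} k·P(X_n^φ = k) = 0 for all integers n ≥ 0; (3) α = β = 1/2. -/
import Mathlib


open scoped BigOperators

/-- The matrix `P = [[a, b], [0, 0]]`. -/
noncomputable def Pmat (a b : ℝ) : Matrix (Fin 2) (Fin 2) ℝ := !![a, b; 0, 0]
/-- The matrix `Q = [[0, 0], [c, d]]`. -/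
noncomputable def Qmat (c d : ℝ) : Matrix (Fin 2) (Fin 2) ℝ := !![0, 0; c, d]
/-- The matrix `R = [[c, d], [0, 0]]`. -/
noncomputable def Rmat (c d : ℝ) : Matrix (Fin 2) (Fin 2) ℝ := !![c, d; 0, 0]
/-- The matrix `S = [[0, 0], [a, b]]`. -/
noncomputable def Smat (a b : ℝ) : Matrix (Fin 2) (Fin 2) ℝ := !![0, 0; a, b]

/-- `Xi Pm Qm l m` is the sum, over all words of length `l + m` in the letters `Pm`, `Qm`
containing exactly `l` letters `Pm` and `m` letters `Qm`, of the ordered matrix product of the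
letters of the word (a word is encoded as `w : Fin (l+m) → Bool`, `true` standing for `Pm`). -/
noncomputable def Xi (Pm Qm : Matrix (Fin 2) (Fin 2) ℝ) (l m : ℕ) :
    Matrix (Fin 2) (Fin 2) ℝ :=
  ∑ w ∈ Finset.univ.filter
      (fun w : Fin (l + m) → Bool => (Finset.univ.filter (fun i => w i = true)).card = l),
    (List.ofFn (fun i => if w i = true then Pm else Qm)).prod

/-- Row vector `(1,1)` times a matrix times the column vector `(α, β)ᵀ`. -/
noncomputable def entryPair (M : Matrix (Fin 2) (Fin 2) ℝ) (α β : ℝ) : ℝ :=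
  (M 0 0 + M 1 0) * α + (M 0 1 + M 1 1) * β

/-- `walkProb Pm Qm α β n k = P(X_n^φ = k)`: the distribution of the correlated random walk
started at `0` with initial distribution `φ = (α, β)`, namely
`(1,1)·Ξ((n−k)/2, (n+k)/2)·(α,β)ᵀ` for `|k| ≤ n` with `n + k` even, and `0` otherwise. -/
noncomputable def walkProb (Pm Qm : Matrix (Fin 2) (Fin 2) ℝ) (α β : ℝ) (n : ℕ) (k : ℤ) :
    ℝ :=
  if |k| ≤ (n : ℤ) ∧ ((n : ℤ) + k) % 2 = 0 then
    entryPair (Xi Pm Qm (((n : ℤ) - k) / 2).toNat (((n : ℤ) + k) / 2).toNat) α β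
  else 0

/-- `F₁^{(n,k)} = Σ_{γ=1}^{k} (bc/ad)^{γ−1} C(k−1,γ−1) C(n−k−1,γ−1)
  = ₂F₁(−(k−1), −(n−k−1); 1; bc/ad)`. -/
noncomputable def F1 (a b c d : ℝ) (n k : ℕ) : ℝ :=
  ∑ γ ∈ Finset.Icc 1 k,
    (b * c / (a * d)) ^ (γ - 1) * (Nat.choose (k - 1) (γ - 1) : ℝ)
      * (Nat.choose (n - k - 1) (γ - 1) : ℝ)

/-- `F₂^{(n,k)} = Σ_{γ=1}^{k} (bc/ad)^{γ−1} (1/γ) C(k−1,γ−1) C(n−k−1,γ−1)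
  = ₂F₁(−(k−1), −(n−k−1); 2; bc/ad)`. -/
noncomputable def F2 (a b c d : ℝ) (n k : ℕ) : ℝ :=
  ∑ γ ∈ Finset.Icc 1 k,
    (b * c / (a * d)) ^ (γ - 1) * (1 / (γ : ℝ)) * (Nat.choose (k - 1) (γ - 1) : ℝ)
      * (Nat.choose (n - k - 1) (γ - 1) : ℝ)


noncomputable def Jmat : Matrix (Fin 2) (Fin 2) ℝ := !![0, 1; 1, 0]

lemma JJ : Jmat * Jmat = 1 := by
  ext i j
  fin_cases i <;> fin_cases j <;> simp [Matrix.mul_apply, Fin.sum_univ_two, Jmat, Matrix.one_apply]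

lemma conj_list (L : List (Matrix (Fin 2) (Fin 2) ℝ)) :
    Jmat * L.prod * Jmat = (L.map (fun M => Jmat * M * Jmat)).prod := by
  induction L with
  | nil => simp [JJ]
  | cons M L ih =>
    simp only [List.prod_cons, List.map_cons]
    rw [← ih]
    rw [show (Jmat * M * Jmat) * (Jmat * (L.prod) * Jmat)
        = Jmat * M * (Jmat * Jmat) * L.prod * Jmat by noncomm_ring, JJ]
    noncomm_ring

lemma sumE_conj (M : Matrix (Fin 2) (Fin 2) ℝ) :
    (Jmat * M * Jmat) 0 0 + (Jmat * M * Jmat) 0 1 + (Jmat * M * Jmat) 1 0 + (Jmat * M * Jmat) 1 1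
      = M 0 0 + M 0 1 + M 1 0 + M 1 1 := by
  simp [Matrix.mul_apply, Fin.sum_univ_two, Jmat, Matrix.vecMul, dotProduct,
    Matrix.vecHead, Matrix.vecTail]
  ring

lemma conjP (a : ℝ) : Jmat * Pmat a (1 - a) * Jmat = Qmat (1 - a) a := by
  ext i j
  fin_cases i <;> fin_cases j <;>
    simp [Matrix.mul_apply, Fin.sum_univ_two, Jmat, Pmat, Qmat]

lemma conjQ (a : ℝ) : Jmat * Qmat (1 - a) a * Jmat = Pmat a (1 - a) := by
  ext i j
  fin_cases i <;> fin_cases j <;>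
    simp [Matrix.mul_apply, Fin.sum_univ_two, Jmat, Pmat, Qmat]


noncomputable def Xi' (Pm Qm : Matrix (Fin 2) (Fin 2) ℝ) (n l : ℕ) :
    Matrix (Fin 2) (Fin 2) ℝ :=
  ∑ w ∈ Finset.univ.filter
      (fun w : Fin n → Bool => (Finset.univ.filter (fun i => w i = true)).card = l),
    (List.ofFn (fun i => if w i = true then Pm else Qm)).prod

lemma Xi_eq (Pm Qm : Matrix (Fin 2) (Fin 2) ℝ) (l m : ℕ) :
    Xi Pm Qm l m = Xi' Pm Qm (l + m) l := rfl

lemma card_not (n : ℕ) (w : Fin n → Bool) :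
    (Finset.univ.filter (fun i => (!w i) = true)).card
      = n - (Finset.univ.filter (fun i => w i = true)).card := by
  have h : (Finset.univ.filter (fun i => (!w i) = true))
      = (Finset.univ.filter (fun i => w i = true))ᶜ := by
    ext i; simp
  rw [h, Finset.card_compl]
  simp

lemma Xi'_swap (Pm Qm : Matrix (Fin 2) (Fin 2) ℝ) (n l : ℕ) (hl : l ≤ n) :
    Xi' Pm Qm n (n - l) =
      ∑ w ∈ Finset.univ.filter
        (fun w : Fin n → Bool => (Finset.univ.filter (fun i => w i = true)).card = l),
      (List.ofFn (fun i => if w i = true then Qm else Pm)).prod := by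
  unfold Xi'
  apply Finset.sum_nbij' (i := fun w => fun i => !(w i)) (j := fun w => fun i => !(w i))
  · intro w hw
    simp only [Finset.mem_filter, Finset.mem_univ, true_and] at hw ⊢
    rw [card_not, hw, Nat.sub_sub_self hl]
  · intro w hw
    simp only [Finset.mem_filter, Finset.mem_univ, true_and] at hw ⊢
    rw [card_not, hw]
  · intro w hw; funext i; simp
  · intro w hw; funext i; simp
  · intro w hw
    refine congrArg List.prod (congrArg List.ofFn ?_)
    funext i
    cases h : w i <;> simp [h]

lemma Xi'_conj (a : ℝ) (n l : ℕ) (hl : l ≤ n) :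
    Jmat * Xi' (Pmat a (1 - a)) (Qmat (1 - a) a) n l * Jmat
      = Xi' (Pmat a (1 - a)) (Qmat (1 - a) a) n (n - l) := by
  rw [Xi'_swap _ _ n l hl]
  unfold Xi'
  rw [Finset.mul_sum, Finset.sum_mul]
  apply Finset.sum_congr rfl
  intro w _
  rw [conj_list, List.map_ofFn]
  refine congrArg List.prod (congrArg List.ofFn ?_)
  funext i
  cases h : w i <;> simp [h, conjP, conjQ]

lemma sumE_Xi_swap (a : ℝ) (l m : ℕ) :
    (Xi (Pmat a (1 - a)) (Qmat (1 - a) a) l m) 0 0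
      + (Xi (Pmat a (1 - a)) (Qmat (1 - a) a) l m) 0 1
      + (Xi (Pmat a (1 - a)) (Qmat (1 - a) a) l m) 1 0
      + (Xi (Pmat a (1 - a)) (Qmat (1 - a) a) l m) 1 1
    = (Xi (Pmat a (1 - a)) (Qmat (1 - a) a) m l) 0 0
      + (Xi (Pmat a (1 - a)) (Qmat (1 - a) a) m l) 0 1
      + (Xi (Pmat a (1 - a)) (Qmat (1 - a) a) m l) 1 0
      + (Xi (Pmat a (1 - a)) (Qmat (1 - a) a) m l) 1 1 := by
  rw [Xi_eq, Xi_eq, Nat.add_comm m l]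
  have h : Xi' (Pmat a (1 - a)) (Qmat (1 - a) a) (l + m) m
      = Jmat * Xi' (Pmat a (1 - a)) (Qmat (1 - a) a) (l + m) l * Jmat := by
    rw [Xi'_conj a (l + m) l (Nat.le_add_right l m), Nat.add_sub_cancel_left]
  rw [h, sumE_conj]



lemma wp_symm (a : ℝ) (n : ℕ) (k : ℤ) :
    walkProb (Pmat a (1 - a)) (Qmat (1 - a) a) (1/2) (1/2) n k
      = walkProb (Pmat a (1 - a)) (Qmat (1 - a) a) (1/2) (1/2) n (-k) := by
  unfold walkProb
  by_cases h : |k| ≤ (n : ℤ) ∧ ((n : ℤ) + k) % 2 = 0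
  · have h' : |(-k)| ≤ (n : ℤ) ∧ ((n : ℤ) + (-k)) % 2 = 0 := by
      refine ⟨by rw [abs_neg]; exact h.1, ?_⟩
      have := h.2; omega
    rw [if_pos h, if_pos h']
    rw [show ((n : ℤ) - -k) = n + k by ring, show ((n : ℤ) + -k) = n - k by ring]
    unfold entryPair
    have key := sumE_Xi_swap a (((n : ℤ) - k) / 2).toNat (((n : ℤ) + k) / 2).toNat
    linarith
  · have h' : ¬(|(-k)| ≤ (n : ℤ) ∧ ((n : ℤ) + (-k)) % 2 = 0) := by
      rw [abs_neg]
      rintro ⟨h1, h2⟩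
      exact h ⟨h1, by omega⟩
    rw [if_neg h, if_neg h']

lemma filter01 : (Finset.univ.filter
      (fun w : Fin (0 + 1) → Bool => (Finset.univ.filter (fun i => w i = true)).card = 0))
    = {fun _ => false} := by decide

lemma filter10 : (Finset.univ.filter
      (fun w : Fin (1 + 0) → Bool => (Finset.univ.filter (fun i => w i = true)).card = 1))
    = {fun _ => true} := by decide

lemma Xi01 (Pm Qm : Matrix (Fin 2) (Fin 2) ℝ) : Xi Pm Qm 0 1 = Qm := by
  unfold Xi
  rw [filter01, Finset.sum_singleton]
  simp [List.ofFn_succ]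

lemma Xi10 (Pm Qm : Matrix (Fin 2) (Fin 2) ℝ) : Xi Pm Qm 1 0 = Pm := by
  unfold Xi
  rw [filter10, Finset.sum_singleton]
  simp [List.ofFn_succ]

lemma wp11 (a α β : ℝ) :
    walkProb (Pmat a (1 - a)) (Qmat (1 - a) a) α β 1 1 = (1 - a) * α + a * β := by
  have h : |(1:ℤ)| ≤ ((1:ℕ) : ℤ) ∧ (((1:ℕ) : ℤ) + 1) % 2 = 0 := by decide
  unfold walkProb
  rw [if_pos h]
  norm_num [Xi01, entryPair, Qmat]

lemma wp1neg1 (a α β : ℝ) :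
    walkProb (Pmat a (1 - a)) (Qmat (1 - a) a) α β 1 (-1) = a * α + (1 - a) * β := by
  have h : |(-1:ℤ)| ≤ ((1:ℕ) : ℤ) ∧ (((1:ℕ) : ℤ) + (-1)) % 2 = 0 := by decide
  unfold walkProb
  rw [if_pos h]
  norm_num [Xi10, entryPair, Pmat]

lemma balance (a α β : ℝ) (hane : a ≠ 1 / 2) (hαβ : α + β = 1)
    (heq : (1 - a) * α + a * β = a * α + (1 - a) * β) : α = 1 / 2 ∧ β = 1 / 2 := by
  have h2 : (1 - 2 * a) * (α - β) = 0 := by linear_combination heq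
  have h3 : α - β = 0 := by
    rcases mul_eq_zero.mp h2 with h | h
    · exact absurd (by linarith : a = 1 / 2) hane
    · exact h
  constructor <;> linarith

/-- Proposition 5(i): for `a = d ∈ (0,1)`, `a ≠ 1/2`, the following are equivalent for an
initial distribution `φ = (α, β)`:
(1) the distribution of `X_n^φ` is symmetric for all `n`;
(2) `E(X_n^φ) = 0` for all `n`;
(3) `α = β = 1/2`. -/
theorem symmetry_condition (a α β : ℝ) (ha : 0 < a) (ha1 : a < 1) (hane : a ≠ 1 / 2)
    (hα : 0 ≤ α) (hβ : 0 ≤ β) (hαβ : α + β = 1) :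
    ((∀ (n : ℕ) (k : ℤ),
        walkProb (Pmat a (1 - a)) (Qmat (1 - a) a) α β n k =
          walkProb (Pmat a (1 - a)) (Qmat (1 - a) a) α β n (-k)) ↔
      (α = 1 / 2 ∧ β = 1 / 2)) ∧
    ((∀ n : ℕ,
        ∑' k : ℤ, (k : ℝ) * walkProb (Pmat a (1 - a)) (Qmat (1 - a) a) α β n k = 0) ↔
      (α = 1 / 2 ∧ β = 1 / 2)) := by
  constructor
  · constructor
    · intro h
      have h1 := h 1 1
      rw [wp11, wp1neg1] at h1
      exact balance a α β hane hαβ h1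
    · rintro ⟨hA, hB⟩
      subst hA; subst hB
      intro n k
      exact wp_symm a n k
  · constructor
    · intro h
      have h1 := h 1
      have hz : ∀ k ∉ ({-1, 1} : Finset ℤ),
          (k : ℝ) * walkProb (Pmat a (1 - a)) (Qmat (1 - a) a) α β 1 k = 0 := by
        intro k hk
        simp only [Finset.mem_insert, Finset.mem_singleton] at hk
        push_neg at hk
        by_cases h0 : k = 0
        · subst h0; simp
        · have hw : walkProb (Pmat a (1 - a)) (Qmat (1 - a) a) α β 1 k = 0 := by
            unfold walkProb
            rw [if_neg]
            rintro ⟨hk1, hk2⟩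
            rw [abs_le] at hk1
            omega
          rw [hw, mul_zero]
      rw [tsum_eq_sum hz, Finset.sum_pair (by decide : (-1 : ℤ) ≠ 1)] at h1
      rw [wp11, wp1neg1] at h1
      push_cast at h1
      exact balance a α β hane hαβ (by linarith)
    · rintro ⟨hA, hB⟩
      subst hA; subst hB
      intro n
      set f : ℤ → ℝ := fun k =>
        (k : ℝ) * walkProb (Pmat a (1 - a)) (Qmat (1 - a) a) (1 / 2) (1 / 2) n k with hf
      have h1 := (Equiv.neg ℤ).tsum_eq f
      simp only [Equiv.neg_apply] at h1
      have h2 : ∀ k : ℤ, f (-k) = -(f k) := by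
        intro k
        simp only [hf]
        rw [← wp_symm a n k]
        push_cast
        ring
      have h3 : ∑' (k : ℤ), f (-k) = ∑' (k : ℤ), -(f k) := tsum_congr h2
      rw [tsum_neg] at h3
      rw [h3] at h1
      linarith
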